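/- arXiv:1401.3801 — 3 statements merged into one kernel-verified Lean document; each statement's English description precedes it below -/
import Mathlib

section
/- Let X be a nonempty finite set, M : X × X → ℝ a matrix with nonnegative entries, λ > 0 a real number, and v : X → ℝ a vector with v(x) ≥ 1 for all x satisfying Σ_{x∈X} M(x, x̄) v(x) = λ v(x̄) for every x̄ ∈ X. Let w : X → ℝ be a vector with w(x) ≥ 0 for all x and Σ_x w(x) > 0. Then lim_{n→∞} (1/n) · log ( Σ_{x, x̄ ∈ X} (M^n)(x, x̄) w(x̄) ) = log λ. -/
/-!
Transposing the eigenvalue equation, `v` is a left eigenvector: `v ᵥ* M = λ • v`, hence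
`v ⬝ᵥ (Mⁿ *ᵥ w) = λⁿ (v ⬝ᵥ w)`. Since `Mⁿ *ᵥ w ≥ 0` and `V⁻¹ • v ≤ 1 ≤ v` with `V = ∑ v`,
the quantity `∑ (Mⁿ *ᵥ w) = 1 ⬝ᵥ (Mⁿ *ᵥ w)` is squeezed between two constant multiples of `λⁿ`;
taking `(1/n) log` kills the constants.
-/

open Filter Topology Real Matrix

namespace Matrix

variable {n R : Type*} [Fintype n]

lemma mulVec_nonneg {m : Type*} [Semiring R] [PartialOrder R] [IsOrderedRing R]
    {A : Matrix m n R} (hA : ∀ i j, 0 ≤ A i j) {w : n → R} (hw : 0 ≤ w) : 0 ≤ A *ᵥ w :=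
  fun i => dotProduct_nonneg_of_nonneg (fun j => hA i j) hw

lemma dotProduct_mulVec_le_dotProduct_mulVec [Semiring R] [PartialOrder R] [IsOrderedRing R]
    {A : Matrix n n R} (hA : ∀ i j, 0 ≤ A i j) {w : n → R} (hw : 0 ≤ w) {u u' : n → R}
    (huu' : u ≤ u') : u ⬝ᵥ (A *ᵥ w) ≤ u' ⬝ᵥ (A *ᵥ w) :=
  dotProduct_le_dotProduct_of_nonneg_right huu' (mulVec_nonneg hA hw)

variable [DecidableEq n] [CommSemiring R] {A : Matrix n n R} {v : n → R} {c : R}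

lemma vecMul_pow_of_vecMul_eq_smul (h : v ᵥ* A = c • v) (k : ℕ) : v ᵥ* A ^ k = c ^ k • v := by
  induction k with
  | zero => simp
  | succ k ih => rw [pow_succ, ← vecMul_vecMul, ih, smul_vecMul, h, smul_smul, pow_succ]

lemma dotProduct_pow_mulVec_of_vecMul_eq_smul (h : v ᵥ* A = c • v) (k : ℕ) (w : n → R) :
    v ⬝ᵥ (A ^ k *ᵥ w) = c ^ k * (v ⬝ᵥ w) := by
  rw [dotProduct_mulVec, vecMul_pow_of_vecMul_eq_smul h, smul_dotProduct, smul_eq_mul]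

end Matrix

lemma tendsto_inv_mul_log_pow_mul {lam c : ℝ} (hlam : 0 < lam) (hc : 0 < c) :
    Tendsto (fun n : ℕ => (1 / (n : ℝ)) * log (lam ^ n * c)) atTop (𝓝 (log lam)) := by
  have h : Tendsto (fun n : ℕ => log lam + (1 / (n : ℝ)) * log c) atTop (𝓝 (log lam)) := by
    simpa using tendsto_const_nhds.add (tendsto_one_div_atTop_nhds_zero_nat.mul_const (log c))
  refine h.congr' ?_
  filter_upwards [eventually_ne_atTop 0] with n hn
  rw [log_mul (pow_ne_zero _ hlam.ne') hc.ne', log_pow]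
  field_simp

lemma tendsto_inv_mul_log_of_pow_mul_le_of_le_pow_mul {S : ℕ → ℝ} {lam c C : ℝ} (hlam : 0 < lam)
    (hc : 0 < c) (hlo : ∀ n, lam ^ n * c ≤ S n) (hhi : ∀ n, S n ≤ lam ^ n * C) :
    Tendsto (fun n : ℕ => (1 / (n : ℝ)) * log (S n)) atTop (𝓝 (log lam)) := by
  have hS : ∀ n, 0 < S n := fun n => (mul_pos (pow_pos hlam n) hc).trans_le (hlo n)
  have hC : 0 < C := by simpa using (hS 0).trans_le (hhi 0)
  refine tendsto_of_tendsto_of_tendsto_of_le_of_le (tendsto_inv_mul_log_pow_mul hlam hc)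
    (tendsto_inv_mul_log_pow_mul hlam hC) (fun n => ?_) (fun n => ?_)
  · exact mul_le_mul_of_nonneg_left (log_le_log (mul_pos (pow_pos hlam n) hc) (hlo n))
      (by positivity)
  · exact mul_le_mul_of_nonneg_left (log_le_log (hS n) (hhi n)) (by positivity)

theorem stmt_1_general {X : Type*} [Fintype X] [DecidableEq X]
    (M : Matrix X X ℝ) (hM : ∀ x x', 0 ≤ M x x')
    (lam : ℝ) (hlam : 0 < lam)
    (v : X → ℝ) (hv : ∀ x, 1 ≤ v x)
    (heig : ∀ x', ∑ x, M x x' * v x = lam * v x')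
    (w : X → ℝ) (hw : ∀ x, 0 ≤ w x) (hwpos : 0 < ∑ x, w x) :
    Filter.Tendsto
      (fun n : ℕ => (1 / (n : ℝ)) * Real.log (∑ x, ∑ x', (M ^ n) x x' * w x'))
      Filter.atTop (nhds (Real.log lam)) := by
  have hleft : v ᵥ* M = lam • v := funext fun x' => by
    simpa [vecMul, dotProduct, mul_comm] using heig x'
  have hsum : ∀ n, ∑ x, ∑ x', (M ^ n) x x' * w x' = 1 ⬝ᵥ (M ^ n *ᵥ w) := fun n => by
    simp [mulVec, dotProduct]
  set V := ∑ x, v x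
  have hV : 0 < V := Finset.sum_pos (fun x _ => one_pos.trans_le (hv x))
    (Finset.nonempty_of_sum_ne_zero hwpos.ne')
  have hvw : 0 < v ⬝ᵥ w := hwpos.trans_le <| by
    simpa [one_dotProduct] using dotProduct_le_dotProduct_of_nonneg_right (show 1 ≤ v from hv) hw
  have hlo : ∀ n, lam ^ n * (V⁻¹ * (v ⬝ᵥ w)) ≤ 1 ⬝ᵥ (M ^ n *ᵥ w) := fun n => calc
    _ = (V⁻¹ • v) ⬝ᵥ (M ^ n *ᵥ w) := by
      rw [smul_dotProduct, dotProduct_pow_mulVec_of_vecMul_eq_smul hleft, smul_eq_mul]; ring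
    _ ≤ 1 ⬝ᵥ (M ^ n *ᵥ w) := dotProduct_mulVec_le_dotProduct_mulVec (pow_apply_nonneg hM n) hw
      fun x => inv_mul_le_one_of_le₀ (Finset.single_le_sum (fun y _ => zero_le_one.trans (hv y))
        (Finset.mem_univ x)) hV.le
  have hhi : ∀ n, 1 ⬝ᵥ (M ^ n *ᵥ w) ≤ lam ^ n * (v ⬝ᵥ w) := fun n =>
    dotProduct_pow_mulVec_of_vecMul_eq_smul hleft n w ▸
      dotProduct_mulVec_le_dotProduct_mulVec (pow_apply_nonneg hM n) hw fun x => hv x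
  simp_rw [hsum]
  exact tendsto_inv_mul_log_of_pow_mul_le_of_le_pow_mul hlam (by positivity) hlo hhi

/-- the normalized logarithm of `⟨u, Mⁿ w⟩` converges to `log λ`,
where `λ` is a positive eigenvalue of the transpose of `M` with eigenvector `v ≥ 1`. -/
theorem stmt_1 {X : Type*} [Fintype X] [DecidableEq X] [Nonempty X]
    (M : Matrix X X ℝ) (hM : ∀ x x', 0 ≤ M x x')
    (lam : ℝ) (hlam : 0 < lam)
    (v : X → ℝ) (hv : ∀ x, 1 ≤ v x)
    (heig : ∀ x', ∑ x, M x x' * v x = lam * v x')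
    (w : X → ℝ) (hw : ∀ x, 0 ≤ w x) (hwpos : 0 < ∑ x, w x) :
    Filter.Tendsto
      (fun n : ℕ => (1 / (n : ℝ)) * Real.log (∑ x, ∑ x', (M ^ n) x x' * w x'))
      Filter.atTop (nhds (Real.log lam)) :=
  stmt_1_general M hM lam hlam v hv heig w hw hwpos
end

section
/- Let X be a nonempty finite set and let P0 and P1 be strictly positive probability distributions on X. Define φ(θ) := log Σ_x P0(x)^{1−θ} P1(x)^θ. A test is a function T : X → [0,1], and for ε ∈ [0,1] define β_ε(P1‖P0) := inf { Σ_x P0(x)(1 − T(x)) : T a test with Σ_x P1(x) T(x) ≤ ε }. Let r ≥ 0, s > 0, θ ∈ (0,1), and θ̄ ≥ 0, and set γ := ( −(1+θ̄) φ(θ) + φ((1+θ̄)θ − θ̄) − θ̄ r ) / (1+θ̄). If 2 e^{γ} < 1, then β_{e^{−r}}(P1‖P0) ≥ (1 − 2 e^{γ})^{(1+s)/s} · exp( −(φ((1+s)θ) − (1+s)φ(θ)) / s ). -/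
open scoped Classical

open Real Finset

/-!
Put `Q_θ x = P0 x · (P1 x / P0 x)^θ`, so that `∑ Q_θ = exp (φ θ)`. Splitting `X` at the threshold
`P1 / P0 = exp (-t)` bounds the `Q_θ`-mass of a test `T` with `∑ P1 T ≤ exp (-r)` by
`exp ((1 - θ) t - r) + exp (-θbar (1 - θ) t + φ θ')`, where `θ' = (1 + θbar) θ - θbar`; choosing `t`
to make both exponents equal gives `2 exp (γ + φ θ)`. So the acceptance weight `1 - T` carries
`Q_θ`-mass at least `exp (φ θ) (1 - 2 exp γ)`, and Hölder's inequality with exponent `1 + s` (the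
monotonicity of the Rényi divergence `D_{1+s}(P_θ ‖ P0)` under the test) bounds the `(1 + s)`-th
power of that mass by `exp (φ ((1 + s) θ)) (∑ P0 (1 - T))^s`.
-/

lemma rpow_one_sub_mul_rpow_eq_mul_div_rpow {a b : ℝ} (ha : 0 < a) (hb : 0 ≤ b) (θ : ℝ) :
    a ^ (1 - θ) * b ^ θ = a * (b / a) ^ θ := by
  rw [div_rpow hb ha.le, rpow_sub ha, rpow_one]
  have : a ^ θ ≠ 0 := (rpow_pos_of_pos ha θ).ne'
  field_simp

lemma rpow_mul_le_exp_mul_add_exp_mul_rpow {L T : ℝ} (hL : 0 < L) (hT0 : 0 ≤ T) (hT1 : T ≤ 1)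
    {θ μ : ℝ} (hθ : θ ≤ 1) (hμ : 0 ≤ μ) (t : ℝ) :
    L ^ θ * T ≤ exp ((1 - θ) * t) * (L * T) + exp (-(μ * t)) * L ^ (θ - μ) := by
  rcases le_or_gt (exp (-t)) L with hge | hlt
  · have hL : L ^ θ ≤ exp ((1 - θ) * t) * L :=
      calc L ^ θ = L ^ (θ - 1) * L := by rw [rpow_sub_one hL.ne', div_mul_cancel₀ _ hL.ne']
        _ ≤ exp (-t) ^ (θ - 1) * L :=
          mul_le_mul_of_nonneg_right (rpow_le_rpow_of_nonpos (exp_pos _) hge (by linarith)) hL.le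
        _ = exp ((1 - θ) * t) * L := by rw [← exp_mul]; congr 2; ring
    have : 0 ≤ exp (-(μ * t)) * L ^ (θ - μ) := by positivity
    nlinarith
  · have hL : L ^ θ ≤ exp (-(μ * t)) * L ^ (θ - μ) :=
      calc L ^ θ = L ^ μ * L ^ (θ - μ) := by rw [← rpow_add hL]; ring_nf
        _ ≤ exp (-t) ^ μ * L ^ (θ - μ) := by gcongr
        _ = exp (-(μ * t)) * L ^ (θ - μ) := by rw [← exp_mul]; congr 2; ring
    have : L ^ θ * T ≤ L ^ θ := mul_le_of_le_one_right (by positivity) hT1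
    have : 0 ≤ exp ((1 - θ) * t) * (L * T) := by positivity
    linarith

section
variable {X : Type*} [Fintype X]

lemma sum_mul_div_rpow_mul_le {P0 P1 T : X → ℝ} (hP0 : ∀ x, 0 < P0 x) (hP1 : ∀ x, 0 < P1 x)
    (hT : ∀ x, T x ∈ Set.Icc 0 1) {θ μ : ℝ} (hθ : θ ≤ 1) (hμ : 0 ≤ μ) (t : ℝ) :
    ∑ x, P0 x * (P1 x / P0 x) ^ θ * T x ≤ exp ((1 - θ) * t) * ∑ x, P1 x * T x +
      exp (-(μ * t)) * ∑ x, P0 x * (P1 x / P0 x) ^ (θ - μ) := by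
  rw [mul_sum, mul_sum, ← sum_add_distrib]
  gcongr with x
  have hL := rpow_mul_le_exp_mul_add_exp_mul_rpow (div_pos (hP1 x) (hP0 x)) (hT x).1 (hT x).2
    hθ hμ t
  have hP1_eq : P0 x * (P1 x / P0 x) = P1 x := mul_div_cancel₀ _ (hP0 x).ne'
  calc P0 x * (P1 x / P0 x) ^ θ * T x = P0 x * ((P1 x / P0 x) ^ θ * T x) := by ring
    _ ≤ P0 x * (exp ((1 - θ) * t) * (P1 x / P0 x * T x) +
          exp (-(μ * t)) * (P1 x / P0 x) ^ (θ - μ)) := by gcongr; exact (hP0 x).le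
    _ = _ := by linear_combination exp ((1 - θ) * t) * T x * hP1_eq

lemma rpow_sum_mul_mul_le {P w f : X → ℝ} (hP : ∀ x, 0 ≤ P x) (hw0 : ∀ x, 0 ≤ w x)
    (hw1 : ∀ x, w x ≤ 1) (hf : ∀ x, 0 ≤ f x) {p : ℝ} (hp : 1 ≤ p) :
    (∑ x, P x * w x * f x) ^ p ≤ (∑ x, P x * w x) ^ (p - 1) * ∑ x, P x * f x ^ p := by
  have hPw : ∀ x, 0 ≤ P x * w x := fun x => mul_nonneg (hP x) (hw0 x)
  have hHolder := inner_le_weight_mul_Lp_of_nonneg univ hp _ f hPw hf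
  have hp0 : p ≠ 0 := by positivity
  calc (∑ x, P x * w x * f x) ^ p
      ≤ ((∑ x, P x * w x) ^ (1 - p⁻¹) * (∑ x, P x * w x * f x ^ p) ^ p⁻¹) ^ p :=
        rpow_le_rpow (sum_nonneg fun x _ => mul_nonneg (hPw x) (hf x)) hHolder (by linarith)
    _ = (∑ x, P x * w x) ^ (p - 1) * ∑ x, P x * w x * f x ^ p := by
        have hA : 0 ≤ ∑ x, P x * w x := sum_nonneg fun x _ => hPw x
        have hB : 0 ≤ ∑ x, P x * w x * f x ^ p :=
          sum_nonneg fun x _ => mul_nonneg (hPw x) (rpow_nonneg (hf x) p)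
        rw [mul_rpow (rpow_nonneg hA _) (rpow_nonneg hB _), ← rpow_mul hA, ← rpow_mul hB,
          inv_mul_cancel₀ hp0, rpow_one, sub_mul, inv_mul_cancel₀ hp0, one_mul]
    _ ≤ (∑ x, P x * w x) ^ (p - 1) * ∑ x, P x * f x ^ p := by
        gcongr with x
        · exact rpow_nonneg (sum_nonneg fun x _ => hPw x) _
        · exact rpow_nonneg (hf x) p
        · exact mul_le_of_le_one_right (hP x) (hw1 x)

end

lemma rpow_div_mul_exp_le_of_exp_mul_rpow_le {A B b c s : ℝ} (hb : 0 ≤ b) (hc : 0 ≤ c)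
    (hs : 0 < s) (h : (exp A * c) ^ (1 + s) ≤ b ^ s * exp B) :
    c ^ ((1 + s) / s) * exp (-(B - (1 + s) * A) / s) ≤ b := by
  have h' : c ^ (1 + s) ≤ b ^ s * exp (B - (1 + s) * A) := by
    rw [mul_rpow (exp_pos A).le hc, ← exp_mul] at h
    rw [mul_comm A] at h
    rw [exp_sub, mul_div_assoc', le_div_iff₀ (exp_pos _)]
    linarith
  have := rpow_le_rpow (by positivity) h' (one_div_nonneg.2 hs.le)
  rw [← rpow_mul hc, mul_rpow (by positivity) (exp_pos _).le, ← rpow_mul hb, ← exp_mul,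
    mul_one_div, mul_one_div, mul_one_div, div_self hs.ne', rpow_one] at this
  calc c ^ ((1 + s) / s) * exp (-(B - (1 + s) * A) / s)
      ≤ b * exp ((B - (1 + s) * A) / s) * exp (-(B - (1 + s) * A) / s) := by gcongr
    _ = b := by rw [mul_assoc, ← exp_add, neg_div, add_neg_cancel, exp_zero, mul_one]

theorem stmt_13_general {X : Type*} [Fintype X] [Nonempty X]
    (P0 P1 : X → ℝ) (hP0pos : ∀ x, 0 < P0 x) (hP1pos : ∀ x, 0 < P1 x)
    (φ : ℝ → ℝ) (hφ : ∀ θ, φ θ = Real.log (∑ x, P0 x ^ (1 - θ) * P1 x ^ θ))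
    (r : ℝ) (s : ℝ) (hs : 0 < s)
    (θ : ℝ) (hθ : θ ∈ Set.Ioo (0 : ℝ) 1) (θbar : ℝ) (hθbar : 0 ≤ θbar)
    (γ : ℝ)
    (hγ : γ = (-(1 + θbar) * φ θ + φ ((1 + θbar) * θ - θbar) - θbar * r) / (1 + θbar))
    (hsmall : 2 * Real.exp γ < 1) :
    (1 - 2 * Real.exp γ) ^ ((1 + s) / s) *
        Real.exp (-(φ ((1 + s) * θ) - (1 + s) * φ θ) / s)
      ≤ sInf {b : ℝ | ∃ T : X → ℝ, (∀ x, T x ∈ Set.Icc (0 : ℝ) 1) ∧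
          (∑ x, P1 x * T x ≤ Real.exp (-r)) ∧ b = ∑ x, P0 x * (1 - T x)} := by
  have hθ1 : θ < 1 := hθ.2
  have hmgf : ∀ t, ∑ x, P0 x * (P1 x / P0 x) ^ t = exp (φ t) := fun t => by
    have hpos : 0 < ∑ x, P0 x ^ (1 - t) * P1 x ^ t := sum_pos (fun x _ => by
      have := hP0pos x; have := hP1pos x; positivity) univ_nonempty
    rw [hφ, exp_log hpos]
    exact sum_congr rfl fun x _ =>
      (rpow_one_sub_mul_rpow_eq_mul_div_rpow (hP0pos x) (hP1pos x).le t).symm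
  refine le_csInf ⟨_, 0, fun _ => ⟨le_rfl, zero_le_one⟩, by simp [(exp_pos _).le], rfl⟩ ?_
  rintro b ⟨T, hT, hTr, rfl⟩
  set θ' := (1 + θbar) * θ - θbar
  set t := (r + φ θ') / ((1 + θbar) * (1 - θ))
  have hrej : ∑ x, P0 x * (P1 x / P0 x) ^ θ * T x ≤ 2 * exp (γ + φ θ) := by
    have hsplit := sum_mul_div_rpow_mul_le hP0pos hP1pos hT hθ1.le
      (mul_nonneg hθbar (sub_nonneg.2 hθ1.le)) t
    have hden : (1 + θbar) * (1 - θ) ≠ 0 := by nlinarith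
    have ht : t * ((1 + θbar) * (1 - θ)) = r + φ θ' := div_mul_cancel₀ _ hden
    have e1 : (1 - θ) * t + -r = γ + φ θ := by rw [hγ]; field_simp; linear_combination ht
    have e2 : -(θbar * (1 - θ) * t) + φ θ' = γ + φ θ := by
      rw [hγ]; field_simp; linear_combination -θbar * ht
    rw [show θ - θbar * (1 - θ) = θ' by ring, hmgf] at hsplit
    calc _ ≤ _ := hsplit
      _ ≤ exp ((1 - θ) * t) * exp (-r) + exp (-(θbar * (1 - θ) * t)) * exp (φ θ') := by gcongr
      _ = _ := by rw [← exp_add, ← exp_add, e1, e2]; ring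
  have hacc : exp (φ θ) * (1 - 2 * exp γ) ≤ ∑ x, P0 x * (1 - T x) * (P1 x / P0 x) ^ θ := by
    have : ∑ x, P0 x * (1 - T x) * (P1 x / P0 x) ^ θ =
        exp (φ θ) - ∑ x, P0 x * (P1 x / P0 x) ^ θ * T x := by
      rw [← hmgf, ← sum_sub_distrib]; congr 1; ext x; ring
    rw [exp_add] at hrej
    linarith
  have hHolder := rpow_sum_mul_mul_le (fun x => (hP0pos x).le) (fun x => sub_nonneg.2 (hT x).2)
    (fun x => by linarith [(hT x).1]) (fun x => rpow_nonneg (div_pos (hP1pos x) (hP0pos x)).le θ)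
    (p := 1 + s) (by linarith)
  simp only [← rpow_mul (div_pos (hP1pos _) (hP0pos _)).le, mul_comm θ, hmgf,
    add_sub_cancel_left] at hHolder
  exact rpow_div_mul_exp_le_of_exp_mul_rpow_le
    (sum_nonneg fun x _ => mul_nonneg (hP0pos x).le (sub_nonneg.2 (hT x).2)) (by linarith) hs
    ((rpow_le_rpow (by positivity) hacc (by linarith)).trans hHolder)

/-- converse (impossibility) part of the Hoeffding-type bound
for binary hypothesis testing. -/
theorem stmt_13 {X : Type*} [Fintype X] [Nonempty X]
    (P0 P1 : X → ℝ) (hP0pos : ∀ x, 0 < P0 x) (hP1pos : ∀ x, 0 < P1 x)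
    (hP0 : ∑ x, P0 x = 1) (hP1 : ∑ x, P1 x = 1)
    (φ : ℝ → ℝ) (hφ : ∀ θ, φ θ = Real.log (∑ x, P0 x ^ (1 - θ) * P1 x ^ θ))
    (r : ℝ) (hr : 0 ≤ r) (s : ℝ) (hs : 0 < s)
    (θ : ℝ) (hθ : θ ∈ Set.Ioo (0 : ℝ) 1) (θbar : ℝ) (hθbar : 0 ≤ θbar)
    (γ : ℝ)
    (hγ : γ = (-(1 + θbar) * φ θ + φ ((1 + θbar) * θ - θbar) - θbar * r) / (1 + θbar))
    (hsmall : 2 * Real.exp γ < 1) :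
    (1 - 2 * Real.exp γ) ^ ((1 + s) / s) *
        Real.exp (-(φ ((1 + s) * θ) - (1 + s) * φ θ) / s)
      ≤ sInf {b : ℝ | ∃ T : X → ℝ, (∀ x, T x ∈ Set.Icc (0 : ℝ) 1) ∧
          (∑ x, P1 x * T x ≤ Real.exp (-r)) ∧ b = ∑ x, P0 x * (1 - T x)} :=
  stmt_13_general P0 P1 hP0pos hP1pos φ hφ r s hs θ hθ θbar hθbar γ hγ hsmall
end

section
/- Let X be a nonempty finite set, let W0 and W1 be transition matrices on X with all entries strictly positive (Σ_x W_i(x|x̄) = 1 for every x̄, and W_i(x|x̄) > 0 for all x, x̄), and let P0 and P1 be strictly positive probability distributions on X. For n ≥ 1 and i ∈ {0,1} let Q_i^n be the distribution on X^{n+1} defined by Q_i^n(x_1, …, x_{n+1}) := P_i(x_1) ∏_{j=1}^n W_i(x_{j+1}|x_j). Let s ∈ (−1, ∞) with s ≠ 0, and define D_{1+s}(Q‖Q') := (1/s) log Σ_z Q(z)^{1+s} Q'(z)^{−s} for strictly positive distributions Q, Q' on the same finite set. Suppose λ > 0 and v : X → ℝ with v(x) ≥ 1 for all x satisfy Σ_x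 W0(x|x̄)^{1+s} W1(x|x̄)^{−s} v(x) = λ v(x̄) for every x̄ ∈ X. Then lim_{n→∞} (1/n) · D_{1+s}( Q_0^n ‖ Q_1^n ) = (log λ)/s. -/
/-!
Both chains factor along paths, so `∑ Q0ⁿ^(1+s) Q1ⁿ^(-s)` is a path sum of the positive matrix
`M(x|x̄) = W0(x|x̄)^(1+s) W1(x|x̄)^(-s)` started from `P0^(1+s) P1^(-s)`. Weighting the endpoint of
each path by the eigenvector `v` turns this sum into exactly `λⁿ ∑ P0^(1+s) P1^(-s) v`; since
`1 ≤ v ≤ max v`, the path sum is within constant factors of `λⁿ`, and `(1/n) log` of it tends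
to `log λ`.
-/

open Finset

section PathSum

variable {X : Type*} [Fintype X]

def pathSum (M : X → X → ℝ) (h : X → ℝ) (n : ℕ) : ℝ :=
  ∑ z : Fin (n + 1) → X, h (z 0) * ∏ j : Fin n, M (z j.succ) (z j.castSucc)

theorem sum_path_mul_eigenvector {M : X → X → ℝ} {v : X → ℝ} {lam : ℝ}
    (heig : ∀ x', ∑ x, M x x' * v x = lam * v x') (h : X → ℝ) (n : ℕ) :
    ∑ z : Fin (n + 1) → X,
        h (z 0) * (∏ j : Fin n, M (z j.succ) (z j.castSucc)) * v (z (Fin.last n))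
      = lam ^ n * ∑ x, h x * v x := by
  induction n with
  | zero => simp [← (Equiv.funUnique (Fin 1) X).symm.sum_comp]
  | succ n ih =>
    rw [← (Fin.snocEquiv fun _ => X).sum_comp, Fintype.sum_prod_type_right, pow_succ', mul_assoc,
      ← ih, mul_sum]
    refine sum_congr rfl fun z _ => ?_
    simp only [Fin.snocEquiv_apply, Fin.prod_univ_castSucc, Fin.succ_castSucc, Fin.snoc_castSucc,
      Fin.succ_last, Fin.snoc_last, ← Fin.castSucc_zero]
    rw [mul_left_comm, ← heig, mul_sum]
    exact sum_congr rfl fun x _ => by ring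

variable {M : X → X → ℝ} {h v : X → ℝ} {lam : ℝ}

theorem mul_pathSum_le_of_le (hM : ∀ x x', 0 ≤ M x x') (hh : ∀ x, 0 ≤ h x)
    (heig : ∀ x', ∑ x, M x x' * v x = lam * v x') {a : ℝ} (ha : ∀ x, a ≤ v x) (n : ℕ) :
    a * pathSum M h n ≤ lam ^ n * ∑ x, h x * v x := by
  rw [← sum_path_mul_eigenvector heig, pathSum, mul_sum]
  refine sum_le_sum fun z _ => ?_
  rw [mul_comm a]
  exact mul_le_mul_of_nonneg_left (ha _) (mul_nonneg (hh _) (prod_nonneg fun _ _ => hM _ _))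

theorem le_mul_pathSum_of_le (hM : ∀ x x', 0 ≤ M x x') (hh : ∀ x, 0 ≤ h x)
    (heig : ∀ x', ∑ x, M x x' * v x = lam * v x') {b : ℝ} (hb : ∀ x, v x ≤ b) (n : ℕ) :
    lam ^ n * ∑ x, h x * v x ≤ b * pathSum M h n := by
  rw [← sum_path_mul_eigenvector heig, pathSum, mul_sum]
  refine sum_le_sum fun z _ => ?_
  rw [mul_comm b]
  exact mul_le_mul_of_nonneg_left (hb _) (mul_nonneg (hh _) (prod_nonneg fun _ _ => hM _ _))

end PathSum

open Filter Topology in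
theorem tendsto_one_div_mul_log_of_geometric_bounds {a : ℕ → ℝ} {c₁ c₂ lam : ℝ}
    (hc₁ : 0 < c₁) (hlam : 0 < lam)
    (hlow : ∀ n, c₁ * lam ^ n ≤ a n) (hup : ∀ n, a n ≤ c₂ * lam ^ n) :
    Tendsto (fun n : ℕ => 1 / (n : ℝ) * Real.log (a n)) atTop (𝓝 (Real.log lam)) := by
  have hc₂ : 0 < c₂ := hc₁.trans_le (by simpa using (hlow 0).trans (hup 0))
  have hpos : ∀ n, 0 < a n := fun n => (mul_pos hc₁ (pow_pos hlam n)).trans_le (hlow n)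
  have hlog : ∀ {c : ℝ}, 0 < c → ∀ n : ℕ, Real.log (c * lam ^ n) = Real.log c + n * Real.log lam :=
    fun hc n => by rw [Real.log_mul hc.ne' (pow_pos hlam n).ne', Real.log_pow]
  have hlim : ∀ c : ℝ, Tendsto (fun n : ℕ => 1 / (n : ℝ) * (Real.log c + n * Real.log lam))
      atTop (𝓝 (Real.log lam)) := fun c => by
    have h := (tendsto_const_div_atTop_nhds_zero_nat (Real.log c)).add_const (Real.log lam)
    rw [zero_add] at h
    refine h.congr' ?_
    filter_upwards [eventually_ne_atTop 0] with n hn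
    field_simp
  refine tendsto_of_tendsto_of_tendsto_of_le_of_le (hlim c₁) (hlim c₂) (fun n => ?_) (fun n => ?_)
  · rw [← hlog hc₁]
    exact mul_le_mul_of_nonneg_left (Real.log_le_log (by positivity) (hlow n)) (by positivity)
  · rw [← hlog hc₂]
    exact mul_le_mul_of_nonneg_left (Real.log_le_log (hpos n) (hup n)) (by positivity)

theorem rpow_mul_prod_mul_rpow_mul_prod {ι : Type*} (s : Finset ι) {a b t u : ℝ} {f g : ι → ℝ}
    (ha : 0 ≤ a) (hb : 0 ≤ b) (hf : ∀ i ∈ s, 0 ≤ f i) (hg : ∀ i ∈ s, 0 ≤ g i) :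
    (a * ∏ i ∈ s, f i) ^ t * (b * ∏ i ∈ s, g i) ^ u
      = a ^ t * b ^ u * ∏ i ∈ s, (f i ^ t * g i ^ u) := by
  rw [Real.mul_rpow ha (prod_nonneg hf), Real.mul_rpow hb (prod_nonneg hg),
    ← Real.finsetProd_rpow _ _ hf, ← Real.finsetProd_rpow _ _ hg, prod_mul_distrib]
  ring

theorem stmt_19_general {X : Type*} [Fintype X] [Nonempty X]
    (W0 W1 : X → X → ℝ)
    (hW0pos : ∀ x x', 0 < W0 x x') (hW1pos : ∀ x x', 0 < W1 x x')
    (P0 P1 : X → ℝ) (hP0pos : ∀ x, 0 < P0 x) (hP1pos : ∀ x, 0 < P1 x)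
    (Q0 Q1 : (n : ℕ) → (Fin (n + 1) → X) → ℝ)
    (hQ0 : ∀ n (x : Fin (n + 1) → X),
      Q0 n x = P0 (x 0) * ∏ j : Fin n, W0 (x j.succ) (x j.castSucc))
    (hQ1 : ∀ n (x : Fin (n + 1) → X),
      Q1 n x = P1 (x 0) * ∏ j : Fin n, W1 (x j.succ) (x j.castSucc))
    (s : ℝ)
    (lam : ℝ) (hlam : 0 < lam)
    (v : X → ℝ) (hv : ∀ x, 1 ≤ v x)
    (heig : ∀ x', ∑ x, W0 x x' ^ (1 + s) * W1 x x' ^ (-s) * v x = lam * v x') :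
    Filter.Tendsto
      (fun n : ℕ => (1 / (n : ℝ)) *
        ((1 / s) * Real.log (∑ z : Fin (n + 1) → X, Q0 n z ^ (1 + s) * Q1 n z ^ (-s))))
      Filter.atTop (nhds (Real.log lam / s)) := by
  set M : X → X → ℝ := fun x x' => W0 x x' ^ (1 + s) * W1 x x' ^ (-s)
  set g : X → ℝ := fun x => P0 x ^ (1 + s) * P1 x ^ (-s)
  have hM : ∀ x x', 0 ≤ M x x' := fun x x' =>
    mul_nonneg (Real.rpow_nonneg (hW0pos x x').le _) (Real.rpow_nonneg (hW1pos x x').le _)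
  have hg : ∀ x, 0 < g x := fun x =>
    mul_pos (Real.rpow_pos_of_pos (hP0pos x) _) (Real.rpow_pos_of_pos (hP1pos x) _)
  have hsum : ∀ n, ∑ z : Fin (n + 1) → X, Q0 n z ^ (1 + s) * Q1 n z ^ (-s) = pathSum M g n :=
    fun n => sum_congr rfl fun z _ => by
      rw [hQ0, hQ1, rpow_mul_prod_mul_rpow_mul_prod _ (hP0pos _).le (hP1pos _).le
        (fun j _ => (hW0pos _ _).le) (fun j _ => (hW1pos _ _).le)]
  obtain ⟨xm, hxm⟩ := Finite.exists_max v
  have hc : 0 < ∑ x, g x * v x :=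
    sum_pos (fun x _ => mul_pos (hg x) (one_pos.trans_le (hv x))) univ_nonempty
  have hvxm : 0 < v xm := one_pos.trans_le (hv xm)
  have hlim := tendsto_one_div_mul_log_of_geometric_bounds (a := pathSum M g) (div_pos hc hvxm) hlam
    (fun n => by
      rw [div_mul_eq_mul_div, div_le_iff₀' hvxm, mul_comm]
      exact le_mul_pathSum_of_le hM (fun x => (hg x).le) heig hxm n)
    (fun n => by
      rw [mul_comm]
      simpa using mul_pathSum_le_of_le hM (fun x => (hg x).le) heig hv n)
  simp_rw [hsum]
  convert hlim.const_mul (1 / s) using 2 <;> ring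

/-- the normalized relative Rényi entropy between two Markov
chains converges to `(log λ)/s`, where `λ` is the Perron–Frobenius eigenvalue
of the matrix `W0(x|x̄)^{1+s} W1(x|x̄)^{-s}`, for any initial distributions. -/
theorem stmt_19 {X : Type*} [Fintype X] [Nonempty X]
    (W0 W1 : X → X → ℝ)
    (hW0pos : ∀ x x', 0 < W0 x x') (hW1pos : ∀ x x', 0 < W1 x x')
    (hW0 : ∀ x', ∑ x, W0 x x' = 1) (hW1 : ∀ x', ∑ x, W1 x x' = 1)
    (P0 P1 : X → ℝ) (hP0pos : ∀ x, 0 < P0 x) (hP1pos : ∀ x, 0 < P1 x)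
    (hP0 : ∑ x, P0 x = 1) (hP1 : ∑ x, P1 x = 1)
    (Q0 Q1 : (n : ℕ) → (Fin (n + 1) → X) → ℝ)
    (hQ0 : ∀ n (x : Fin (n + 1) → X),
      Q0 n x = P0 (x 0) * ∏ j : Fin n, W0 (x j.succ) (x j.castSucc))
    (hQ1 : ∀ n (x : Fin (n + 1) → X),
      Q1 n x = P1 (x 0) * ∏ j : Fin n, W1 (x j.succ) (x j.castSucc))
    (s : ℝ) (hs1 : -1 < s) (hs0 : s ≠ 0)
    (lam : ℝ) (hlam : 0 < lam)
    (v : X → ℝ) (hv : ∀ x, 1 ≤ v x)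
    (heig : ∀ x', ∑ x, W0 x x' ^ (1 + s) * W1 x x' ^ (-s) * v x = lam * v x') :
    Filter.Tendsto
      (fun n : ℕ => (1 / (n : ℝ)) *
        ((1 / s) * Real.log (∑ z : Fin (n + 1) → X, Q0 n z ^ (1 + s) * Q1 n z ^ (-s))))
      Filter.atTop (nhds (Real.log lam / s)) :=
  stmt_19_general W0 W1 hW0pos hW1pos P0 P1 hP0pos hP1pos Q0 Q1 hQ0 hQ1 s lam hlam v hv heig
end
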